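/- Generalization lemma for simulations: let R be any relation on closed session types, and suppose ∀V′. C′ ⇒ V₁[ē₁′] ≡_R V₂[ē₂′] holds. Suppose further that the Presburger entailment V ; C ⊨ ∃V′. C′ ∧ ē₁′ = ē₁ ∧ ē₂′ = ē₂ holds, where ē₁ and ē₂ are arithmetic-expression sequences with free variables among V. Then ∀V. C ⇒ V₁[ē₁] ≡_R V₂[ē₂] holds. -/
import Mathlib


/-! Arithmetic expressions and Presburger propositions over natural numbers,
with de Bruijn index variables. -/

inductive AExp : Type
  | const : ℕ → AExp
  | var : ℕ → AExp
  | add : AExp → AExp → AExp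
  | sub : AExp → AExp → AExp
  | mul : ℕ → AExp → AExp
deriving DecidableEq

namespace AExp

def eval (σ : ℕ → ℕ) : AExp → ℕ
  | const n => n
  | var n => σ n
  | add a b => a.eval σ + b.eval σ
  | sub a b => a.eval σ - b.eval σ
  | mul k a => k * a.eval σ

def subst (τ : ℕ → AExp) : AExp → AExp
  | const n => const n
  | var n => τ n
  | add a b => add (a.subst τ) (b.subst τ)
  | sub a b => sub (a.subst τ) (b.subst τ)
  | mul k a => mul k (a.subst τ)

def hasVar : AExp → Bool
  | const _ => false
  | var _ => true
  | add a b => a.hasVar || b.hasVar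
  | sub a b => a.hasVar || b.hasVar
  | mul _ a => a.hasVar

/-- Normalization: a closed arithmetic expression is replaced by its value. -/
def norm (e : AExp) : AExp := if e.hasVar then e else .const (e.eval (fun _ => 0))

/-- Substitution followed by normalization of closed expressions to their values. -/
def substN (τ : ℕ → AExp) (e : AExp) : AExp := (e.subst τ).norm

/-- All variables of `e` are `< k`. -/
def ClosedAt (k : ℕ) : AExp → Prop
  | const _ => True
  | var n => n < k
  | add a b => a.ClosedAt k ∧ b.ClosedAt k
  | sub a b => a.ClosedAt k ∧ b.ClosedAt k
  | mul _ a => a.ClosedAt k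

end AExp

/-- Cons for substitutions/assignments. -/
def scons {α : Type*} (i : α) (σ : ℕ → α) : ℕ → α
  | 0 => i
  | n + 1 => σ n

/-- Lifting a substitution under a binder. -/
def liftτ (τ : ℕ → AExp) : ℕ → AExp :=
  scons (AExp.var 0) (fun n => (τ n).subst (fun k => AExp.var (k + 1)))

inductive AProp : Type
  | aeq : AExp → AExp → AProp
  | agt : AExp → AExp → AProp
  | tt : AProp
  | ff : AProp
  | conj : AProp → AProp → AProp
  | disj : AProp → AProp → AProp
  | neg : AProp → AProp
  | aexists : AProp → AProp
  | aforall : AProp → AProp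

namespace AProp

def holds (σ : ℕ → ℕ) : AProp → Prop
  | aeq a b => a.eval σ = b.eval σ
  | agt a b => b.eval σ < a.eval σ
  | tt => True
  | ff => False
  | conj φ ψ => φ.holds σ ∧ ψ.holds σ
  | disj φ ψ => φ.holds σ ∨ ψ.holds σ
  | neg φ => ¬ φ.holds σ
  | aexists φ => ∃ i : ℕ, φ.holds (scons i σ)
  | aforall φ => ∀ i : ℕ, φ.holds (scons i σ)

def subst (τ : ℕ → AExp) : AProp → AProp
  | aeq a b => aeq (a.subst τ) (b.subst τ)
  | agt a b => agt (a.subst τ) (b.subst τ)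
  | tt => tt
  | ff => ff
  | conj φ ψ => conj (φ.subst τ) (ψ.subst τ)
  | disj φ ψ => disj (φ.subst τ) (ψ.subst τ)
  | neg φ => neg (φ.subst τ)
  | aexists φ => aexists (φ.subst (liftτ τ))
  | aforall φ => aforall (φ.subst (liftτ τ))

def ClosedAt (k : ℕ) : AProp → Prop
  | aeq a b => a.ClosedAt k ∧ b.ClosedAt k
  | agt a b => a.ClosedAt k ∧ b.ClosedAt k
  | tt => True
  | ff => True
  | conj φ ψ => φ.ClosedAt k ∧ ψ.ClosedAt k
  | disj φ ψ => φ.ClosedAt k ∧ ψ.ClosedAt k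
  | neg φ => φ.ClosedAt k
  | aexists φ => φ.ClosedAt (k + 1)
  | aforall φ => φ.ClosedAt (k + 1)

end AProp

/-! Session types.  Labeled choices are represented by association lists of
labels (natural numbers) and types.  Quantifiers bind a de Bruijn index
variable. -/

inductive STy : Type
  | ichoice : List (ℕ × STy) → STy                -- ⊕{ℓ : A_ℓ}
  | echoice : List (ℕ × STy) → STy                -- &{ℓ : A_ℓ}
  | tensor : STy → STy → STy                      -- A ⊗ B
  | lolli : STy → STy → STy                       -- A ⊸ B
  | one : STy                                     -- 1
  | tname : ℕ → List AExp → STy                   -- V[ē]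
  | sassert : AProp → STy → STy                   -- ?{φ}. A
  | sassume : AProp → STy → STy                   -- !{φ}. A
  | sexists : STy → STy                           -- ?n. A
  | sforall : STy → STy                           -- !n. A

namespace STy

/-- Substitution of arithmetic expressions for index variables in a session type. -/
def subst (τ : ℕ → AExp) : STy → STy
  | ichoice L => ichoice (L.attach.map (fun p => (p.1.1, p.1.2.subst τ)))
  | echoice L => echoice (L.attach.map (fun p => (p.1.1, p.1.2.subst τ)))
  | tensor A B => tensor (A.subst τ) (B.subst τ)
  | lolli A B => lolli (A.subst τ) (B.subst τ)
  | one => one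
  | tname v es => tname v (es.map (AExp.substN τ))
  | sassert φ A => sassert (φ.subst τ) (A.subst τ)
  | sassume φ A => sassume (φ.subst τ) (A.subst τ)
  | sexists A => sexists (A.subst (liftτ τ))
  | sforall A => sforall (A.subst (liftτ τ))
decreasing_by
  all_goals simp_wf
  all_goals try omega
  all_goals
    (obtain ⟨⟨l, A⟩, hp⟩ := p
     have h := List.sizeOf_lt_of_mem hp
     simp [Prod.mk.sizeOf_spec] at h ⊢
     omega)

/-- Substituting a number for the index variable bound by a quantifier. -/
def subst0 (i : ℕ) (A : STy) : STy := A.subst (scons (AExp.const i) AExp.var)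

/-- Ground instantiation of all free index variables by natural numbers. -/
def substC (σ : ℕ → ℕ) (A : STy) : STy := A.subst (fun n => AExp.const (σ n))

/-- All free index variables of the type are below `k`. -/
inductive ClosedAt : ℕ → STy → Prop
  | ichoice {k L} : (∀ p ∈ L, ClosedAt k p.2) → ClosedAt k (ichoice L)
  | echoice {k L} : (∀ p ∈ L, ClosedAt k p.2) → ClosedAt k (echoice L)
  | tensor {k A B} : ClosedAt k A → ClosedAt k B → ClosedAt k (tensor A B)
  | lolli {k A B} : ClosedAt k A → ClosedAt k B → ClosedAt k (lolli A B)
  | one {k} : ClosedAt k one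
  | tname {k v es} : (∀ e ∈ es, e.ClosedAt k) → ClosedAt k (tname v es)
  | sassert {k φ A} : φ.ClosedAt k → ClosedAt k A → ClosedAt k (sassert φ A)
  | sassume {k φ A} : φ.ClosedAt k → ClosedAt k A → ClosedAt k (sassume φ A)
  | sexists {k A} : ClosedAt (k + 1) A → ClosedAt k (sexists A)
  | sforall {k A} : ClosedAt (k + 1) A → ClosedAt k (sforall A)

/-- A closed session type: no free index variables. -/
def Closed (A : STy) : Prop := ClosedAt 0 A

def isName : STy → Prop
  | tname _ _ => True
  | _ => False

end STy

/-- A signature is a finite list of type definitions; the type name `v` is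
defined by the `v`-th entry (whose free index variables `0, …` are the
parameters `n̄`). -/
abbrev Sig : Type := List STy

/-- A contractive signature: no definition body is itself a type name. -/
def Contractive (Sg : Sig) : Prop := ∀ B ∈ Sg, ¬ B.isName

/-- Unfolding of a type: a type name is replaced by its instantiated
definition; all other types are returned unchanged. -/
def unfoldT (Sg : Sig) : STy → STy
  | .tname v es => (Sg.getD v .one).subst (fun n => es.getD n (.const 0))
  | A => A

/-- The default (empty) assignment; used to evaluate closed propositions
in the standard model. -/
def σ0 : ℕ → ℕ := fun _ => 0

/-- Componentwise matching of labeled alternatives by a relation. -/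
def MatchAlts (R : STy → STy → Prop) (L L' : List (ℕ × STy)) : Prop :=
  List.Forall₂ (fun p q => p.1 = q.1 ∧ R p.2 q.2) L L'

/-- `R` is a type bisimulation (Definition of type bisimulation). -/
def IsBisim (Sg : Sig) (R : STy → STy → Prop) : Prop :=
  ∀ ⦃A B : STy⦄, R A B →
    (∀ L, unfoldT Sg A = .ichoice L →
      ∃ L', unfoldT Sg B = .ichoice L' ∧ MatchAlts R L L') ∧
    (∀ L, unfoldT Sg A = .echoice L →
      ∃ L', unfoldT Sg B = .echoice L' ∧ MatchAlts R L L') ∧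
    (∀ A₁ A₂, unfoldT Sg A = .tensor A₁ A₂ →
      ∃ B₁ B₂, unfoldT Sg B = .tensor B₁ B₂ ∧ R A₁ B₁ ∧ R A₂ B₂) ∧
    (∀ A₁ A₂, unfoldT Sg A = .lolli A₁ A₂ →
      ∃ B₁ B₂, unfoldT Sg B = .lolli B₁ B₂ ∧ R A₁ B₁ ∧ R A₂ B₂) ∧
    (unfoldT Sg A = .one → unfoldT Sg B = .one) ∧
    (∀ φ A', unfoldT Sg A = .sassert φ A' →
      ∃ ψ B', unfoldT Sg B = .sassert ψ B' ∧
        ((φ.holds σ0 ∧ ψ.holds σ0 ∧ R A' B') ∨ (¬ φ.holds σ0 ∧ ¬ ψ.holds σ0))) ∧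
    (∀ φ A', unfoldT Sg A = .sassume φ A' →
      ∃ ψ B', unfoldT Sg B = .sassume ψ B' ∧
        ((φ.holds σ0 ∧ ψ.holds σ0 ∧ R A' B') ∨ (¬ φ.holds σ0 ∧ ¬ ψ.holds σ0))) ∧
    (∀ A', unfoldT Sg A = .sexists A' →
      ∃ B', unfoldT Sg B = .sexists B' ∧ ∀ i : ℕ, R (A'.subst0 i) (B'.subst0 i)) ∧
    (∀ A', unfoldT Sg A = .sforall A' →
      ∃ B', unfoldT Sg B = .sforall B' ∧ ∀ i : ℕ, R (A'.subst0 i) (B'.subst0 i))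

/-- Type equality: `A ≡ B` iff some type bisimulation relates them. -/
def TpEq (Sg : Sig) (A B : STy) : Prop :=
  ∃ R : STy → STy → Prop, IsBisim Sg R ∧ R A B

/-- The quantified judgment `∀V. C ⇒ A ≡ B`. -/
def EqUnder (Sg : Sig) (C : AProp) (A B : STy) : Prop :=
  ∀ σ : ℕ → ℕ, C.holds σ → TpEq Sg (A.substC σ) (B.substC σ)

/-- A ground instance of an indexed type name `V[ē]` under a ground
substitution `σ` of natural numbers for the index variables: each index
expression is evaluated to its value. -/
def groundName (v : ℕ) (es : List AExp) (σ : ℕ → ℕ) : STy :=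
  .tname v (es.map fun e => .const (e.eval σ))

/-- The judgment `∀V. C ⇒ V₁[ē₁] ≡_R V₂[ē₂]` for an arbitrary relation `R`:
every ground substitution satisfying `C` yields a pair in `R`. -/
def RelUnderName (R : STy → STy → Prop) (C : AProp)
    (v₁ : ℕ) (es₁ : List AExp) (v₂ : ℕ) (es₂ : List AExp) : Prop :=
  ∀ σ : ℕ → ℕ, C.holds σ → R (groundName v₁ es₁ σ) (groundName v₂ es₂ σ)

/-- generalization lemma for simulations. -/
theorem generalization (R : STy → STy → Prop)
    (C' C : AProp) (v₁ v₂ : ℕ) (es₁' es₂' es₁ es₂ : List AExp)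
    (hclosure : RelUnderName R C' v₁ es₁' v₂ es₂')
    (hentail : ∀ σ : ℕ → ℕ, C.holds σ → ∃ σ' : ℕ → ℕ, C'.holds σ' ∧
        es₁'.map (AExp.eval σ') = es₁.map (AExp.eval σ) ∧
        es₂'.map (AExp.eval σ') = es₂.map (AExp.eval σ)) :
    RelUnderName R C v₁ es₁ v₂ es₂ := by
  intro σ hC
  obtain ⟨σ', hC', h1, h2⟩ := hentail σ hC
  have key : ∀ (v : ℕ) (es' es : List AExp),
      es'.map (AExp.eval σ') = es.map (AExp.eval σ) →
      groundName v es' σ' = groundName v es σ := by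
    intro v es' es h
    unfold groundName
    congr 1
    calc (es'.map fun e => AExp.const (e.eval σ'))
        = (es'.map (AExp.eval σ')).map AExp.const := by
          rw [List.map_map]; rfl
      _ = (es.map (AExp.eval σ)).map AExp.const := by rw [h]
      _ = es.map fun e => AExp.const (e.eval σ) := by
          rw [List.map_map]; rfl
  rw [← key v₁ es₁' es₁ h1, ← key v₂ es₂' es₂ h2]
  exact hclosure σ' hC'
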